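/- Let (G₁,δ₁) and (G₂,δ₂) be two metric monoids, and let ε ≥ 0 and r > 0. If (ς₁, ς₂) is an r-local ε-almost isometric isomorphism from (G₁,δ₁) to (G₂,δ₂), then for {j,k} = {1,2}, writing r' = max{0, r − ε}: (1) for all g ∈ G_j[r] and h ∈ G_k[r], |δ_k(ς_j(g), h) − δ_j(g, ς_k(h))| ≤ ε; (2) for all t ∈ [0, r] and all g ∈ G_j[t], ς_j(g) ∈ G_k[t + ε]; (3) for all g ∈ G_j[r'], δ_j(ς_k(ς_j(g)), g) ≤ ε; (4) for all g, g' ∈ G_j[r'/2], δ_k(ς_j(g)ς_j(g'), ς_j(g g')) ≤ 2ε; (5) for all g, g' ∈ G_j[r'], |δ_k(ς_j(g), ς_j(g')) − δ_j(g, g')| ≤ 2ε. -/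

import Mathlib

/-- `(ς, κ)` is an `r`-local `ε`-almost isometric isomorphism between the metric
monoids `G` and `H`. -/
def IsLocAlmostIsoIso {G H : Type*} [Monoid G] [MetricSpace G] [Monoid H] [MetricSpace H]
    (ς : G → H) (κ : H → G) (ε r : ℝ) : Prop :=
  ς 1 = 1 ∧ κ 1 = 1 ∧
    (∀ g ∈ Metric.closedBall (1 : G) r, ∀ g' ∈ Metric.closedBall (1 : G) r,
      ∀ h ∈ Metric.closedBall (1 : H) r,
        |dist (ς g * ς g') h - dist (g * g') (κ h)| ≤ ε) ∧
    (∀ g ∈ Metric.closedBall (1 : H) r, ∀ g' ∈ Metric.closedBall (1 : H) r,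
      ∀ h ∈ Metric.closedBall (1 : G) r,
        |dist (κ g * κ g') h - dist (g * g') (ς h)| ≤ ε)

/-! Evaluating the defining inequality at `g' = 1`, where `ς 1 = 1`, removes the products and
gives (1); the other estimates follow from (1) by the triangle inequality, left invariance being
needed only to keep products of two elements of the `(r - ε)/2`-ball inside the `(r - ε)`-ball.
For `r < ε` the ball of radius `max 0 (r - ε)` is `{1}`, where everything is immediate. -/

open Metric

theorem Metric.forall_mem_closedBall_max_zero {X : Type*} [MetricSpace X] {y : X} {s : ℝ}
    {P : X → Prop} (hy : P y) (hs : ∀ x ∈ closedBall y s, P x) :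
    ∀ x ∈ closedBall y (max 0 s), P x := by
  rcases le_total 0 s with h0 | h0
  · rwa [max_eq_right h0]
  · simpa [max_eq_left h0] using hy

theorem Metric.forall₂_mem_closedBall_max_zero {X : Type*} [MetricSpace X] {y : X} {s : ℝ}
    {P : X → X → Prop} (hy : P y y) (hs : ∀ x ∈ closedBall y s, ∀ x' ∈ closedBall y s, P x x') :
    ∀ x ∈ closedBall y (max 0 s), ∀ x' ∈ closedBall y (max 0 s), P x x' := by
  rcases le_total 0 s with h0 | h0
  · rwa [max_eq_right h0]
  · simpa [max_eq_left h0] using hy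

theorem mul_mem_closedBall_one_add {M : Type*} [Monoid M] [MetricSpace M]
    (h_left : ∀ g h k : M, dist (g * h) (g * k) = dist h k) {g g' : M} {a b : ℝ}
    (hg : g ∈ closedBall (1 : M) a) (hg' : g' ∈ closedBall (1 : M) b) :
    g * g' ∈ closedBall (1 : M) (a + b) := by
  rw [mem_closedBall] at *
  calc dist (g * g') 1 ≤ dist (g * g') (g * 1) + dist g 1 := by simpa using dist_triangle _ g _
    _ = dist g' 1 + dist g 1 := by rw [h_left]
    _ ≤ a + b := by linarith

namespace IsLocAlmostIsoIso

variable {G H : Type*} [Monoid G] [MetricSpace G] [Monoid H] [MetricSpace H]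
  {ς : G → H} {κ : H → G} {ε r : ℝ}

theorem symm (h : IsLocAlmostIsoIso ς κ ε r) : IsLocAlmostIsoIso κ ς ε r :=
  ⟨h.2.1, h.1, h.2.2.2, h.2.2.1⟩

theorem abs_dist_sub_dist_le (h : IsLocAlmostIsoIso ς κ ε r) {g : G} {x : H}
    (hg : g ∈ closedBall (1 : G) r) (hx : x ∈ closedBall (1 : H) r) :
    |dist (ς g) x - dist g (κ x)| ≤ ε := by
  have h1 : (1 : G) ∈ closedBall (1 : G) r := mem_closedBall_self (dist_nonneg.trans hg)
  simpa [h.1] using h.2.2.1 g hg 1 h1 x hx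

theorem map_mem_closedBall (h : IsLocAlmostIsoIso ς κ ε r) {t : ℝ} (ht : t ≤ r) {g : G}
    (hg : g ∈ closedBall (1 : G) t) : ς g ∈ closedBall (1 : H) (t + ε) := by
  have hgr := closedBall_subset_closedBall ht hg
  have h1 : (1 : H) ∈ closedBall (1 : H) r := mem_closedBall_self (dist_nonneg.trans hgr)
  have := abs_le.1 (h.abs_dist_sub_dist_le hgr h1)
  rw [h.2.1] at this
  rw [mem_closedBall] at hg ⊢
  linarith [this.2]

theorem dist_comp_self_le (h : IsLocAlmostIsoIso ς κ ε r) (hε : 0 ≤ ε) {g : G}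
    (hg : g ∈ closedBall (1 : G) (r - ε)) : dist (κ (ς g)) g ≤ ε := by
  have hgr : g ∈ closedBall (1 : G) r := closedBall_subset_closedBall (by linarith) hg
  have hsg : ς g ∈ closedBall (1 : H) r := by
    simpa using h.map_mem_closedBall (by linarith) hg
  simpa [dist_comm] using h.abs_dist_sub_dist_le hgr hsg

theorem dist_map_mul_map_le (h : IsLocAlmostIsoIso ς κ ε r) (hε : 0 ≤ ε)
    (h_left : ∀ g h k : G, dist (g * h) (g * k) = dist h k) {g g' : G}
    (hg : g ∈ closedBall (1 : G) ((r - ε) / 2)) (hg' : g' ∈ closedBall (1 : G) ((r - ε) / 2)) :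
    dist (ς g * ς g') (ς (g * g')) ≤ 2 * ε := by
  have hmul : g * g' ∈ closedBall (1 : G) (r - ε) := by
    simpa using mul_mem_closedBall_one_add h_left hg hg'
  have hr : (r - ε) / 2 ≤ r := by linarith [dist_nonneg.trans (mem_closedBall.1 hg)]
  have hsmul : ς (g * g') ∈ closedBall (1 : H) r := by
    simpa using h.map_mem_closedBall (by linarith) hmul
  have hprod := abs_le.1 <| h.2.2.1 g (closedBall_subset_closedBall hr hg) g'
    (closedBall_subset_closedBall hr hg') _ hsmul
  have hback := h.dist_comp_self_le hε hmul
  rw [dist_comm] at hback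
  linarith [hprod.2]

theorem abs_dist_map_sub_dist_le (h : IsLocAlmostIsoIso ς κ ε r) (hε : 0 ≤ ε) {g g' : G}
    (hg : g ∈ closedBall (1 : G) (r - ε)) (hg' : g' ∈ closedBall (1 : G) (r - ε)) :
    |dist (ς g) (ς g') - dist g g'| ≤ 2 * ε := by
  have hgr : g ∈ closedBall (1 : G) r := closedBall_subset_closedBall (by linarith) hg
  have hsg' : ς g' ∈ closedBall (1 : H) r := by
    simpa using h.map_mem_closedBall (by linarith) hg'
  calc |dist (ς g) (ς g') - dist g g'|
      ≤ |dist (ς g) (ς g') - dist g (κ (ς g'))| + |dist g (κ (ς g')) - dist g g'| :=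
        abs_sub_le _ _ _
    _ ≤ ε + ε := by
        gcongr
        · exact h.abs_dist_sub_dist_le hgr hsg'
        · exact (dist_dist_dist_le_right g _ _).trans (h.dist_comp_self_le hε hg')
    _ = 2 * ε := by ring

end IsLocAlmostIsoIso

theorem uiso_properties_general
    (G₁ G₂ : Type*) [Monoid G₁] [MetricSpace G₁] [Monoid G₂] [MetricSpace G₂]
    (h_left₁ : ∀ g h k : G₁, dist (g * h) (g * k) = dist h k)
    (h_left₂ : ∀ g h k : G₂, dist (g * h) (g * k) = dist h k)
    (ε r : ℝ) (hε : 0 ≤ ε)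
    (ς₁ : G₁ → G₂) (ς₂ : G₂ → G₁)
    (h_iso : IsLocAlmostIsoIso ς₁ ς₂ ε r) :
    -- (1)
    ((∀ g ∈ Metric.closedBall (1 : G₁) r, ∀ h ∈ Metric.closedBall (1 : G₂) r,
        |dist (ς₁ g) h - dist g (ς₂ h)| ≤ ε) ∧
      (∀ g ∈ Metric.closedBall (1 : G₂) r, ∀ h ∈ Metric.closedBall (1 : G₁) r,
        |dist (ς₂ g) h - dist g (ς₁ h)| ≤ ε)) ∧
    -- (2)
    ((∀ t : ℝ, 0 ≤ t → t ≤ r → ∀ g ∈ Metric.closedBall (1 : G₁) t,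
        ς₁ g ∈ Metric.closedBall (1 : G₂) (t + ε)) ∧
      (∀ t : ℝ, 0 ≤ t → t ≤ r → ∀ g ∈ Metric.closedBall (1 : G₂) t,
        ς₂ g ∈ Metric.closedBall (1 : G₁) (t + ε))) ∧
    -- (3)
    ((∀ g ∈ Metric.closedBall (1 : G₁) (max 0 (r - ε)), dist (ς₂ (ς₁ g)) g ≤ ε) ∧
      (∀ g ∈ Metric.closedBall (1 : G₂) (max 0 (r - ε)), dist (ς₁ (ς₂ g)) g ≤ ε)) ∧
    -- (4)
    ((∀ g ∈ Metric.closedBall (1 : G₁) (max 0 (r - ε) / 2),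
        ∀ g' ∈ Metric.closedBall (1 : G₁) (max 0 (r - ε) / 2),
          dist (ς₁ g * ς₁ g') (ς₁ (g * g')) ≤ 2 * ε) ∧
      (∀ g ∈ Metric.closedBall (1 : G₂) (max 0 (r - ε) / 2),
        ∀ g' ∈ Metric.closedBall (1 : G₂) (max 0 (r - ε) / 2),
          dist (ς₂ g * ς₂ g') (ς₂ (g * g')) ≤ 2 * ε)) ∧
    -- (5)
    ((∀ g ∈ Metric.closedBall (1 : G₁) (max 0 (r - ε)),
        ∀ g' ∈ Metric.closedBall (1 : G₁) (max 0 (r - ε)),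
          |dist (ς₁ g) (ς₁ g') - dist g g'| ≤ 2 * ε) ∧
      (∀ g ∈ Metric.closedBall (1 : G₂) (max 0 (r - ε)),
        ∀ g' ∈ Metric.closedBall (1 : G₂) (max 0 (r - ε)),
          |dist (ς₂ g) (ς₂ g') - dist g g'| ≤ 2 * ε)) := by
  have hhalf : max 0 (r - ε) / 2 = max 0 ((r - ε) / 2) := by
    rw [← max_div_div_right zero_le_two, zero_div]
  rw [hhalf]
  refine ⟨⟨fun g hg x hx => h_iso.abs_dist_sub_dist_le hg hx,
      fun g hg x hx => h_iso.symm.abs_dist_sub_dist_le hg hx⟩,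
    ⟨fun t _ ht g hg => h_iso.map_mem_closedBall ht hg,
      fun t _ ht g hg => h_iso.symm.map_mem_closedBall ht hg⟩,
    ⟨forall_mem_closedBall_max_zero ?_ fun g hg => h_iso.dist_comp_self_le hε hg,
      forall_mem_closedBall_max_zero ?_ fun g hg => h_iso.symm.dist_comp_self_le hε hg⟩,
    ⟨forall₂_mem_closedBall_max_zero ?_ fun g hg g' hg' =>
        h_iso.dist_map_mul_map_le hε h_left₁ hg hg',
      forall₂_mem_closedBall_max_zero ?_ fun g hg g' hg' =>
        h_iso.symm.dist_map_mul_map_le hε h_left₂ hg hg'⟩,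
    ⟨forall₂_mem_closedBall_max_zero ?_ fun g hg g' hg' =>
        h_iso.abs_dist_map_sub_dist_le hε hg hg',
      forall₂_mem_closedBall_max_zero ?_ fun g hg g' hg' =>
        h_iso.symm.abs_dist_map_sub_dist_le hε hg hg'⟩⟩ <;>
  simp [h_iso.1, h_iso.2.1, hε]

/-- Basic properties of an `r`-local `ε`-almost isometric
isomorphism `(ς₁, ς₂)` between two metric monoids, for `ε ≥ 0` and `r > 0`, with
`r' = max {0, r − ε}`; each assertion is stated in both directions
(`{j,k} = {1,2}`). -/
theorem uiso_properties
    (G₁ G₂ : Type*) [Monoid G₁] [MetricSpace G₁] [Monoid G₂] [MetricSpace G₂]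
    (h_left₁ : ∀ g h k : G₁, dist (g * h) (g * k) = dist h k)
    (h_cont₁ : Continuous fun p : G₁ × G₁ => p.1 * p.2)
    (h_left₂ : ∀ g h k : G₂, dist (g * h) (g * k) = dist h k)
    (h_cont₂ : Continuous fun p : G₂ × G₂ => p.1 * p.2)
    (ε r : ℝ) (hε : 0 ≤ ε) (hr : 0 < r)
    (ς₁ : G₁ → G₂) (ς₂ : G₂ → G₁)
    (h_iso : IsLocAlmostIsoIso ς₁ ς₂ ε r) :
    -- (1)
    ((∀ g ∈ Metric.closedBall (1 : G₁) r, ∀ h ∈ Metric.closedBall (1 : G₂) r,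
        |dist (ς₁ g) h - dist g (ς₂ h)| ≤ ε) ∧
      (∀ g ∈ Metric.closedBall (1 : G₂) r, ∀ h ∈ Metric.closedBall (1 : G₁) r,
        |dist (ς₂ g) h - dist g (ς₁ h)| ≤ ε)) ∧
    -- (2)
    ((∀ t : ℝ, 0 ≤ t → t ≤ r → ∀ g ∈ Metric.closedBall (1 : G₁) t,
        ς₁ g ∈ Metric.closedBall (1 : G₂) (t + ε)) ∧
      (∀ t : ℝ, 0 ≤ t → t ≤ r → ∀ g ∈ Metric.closedBall (1 : G₂) t,
        ς₂ g ∈ Metric.closedBall (1 : G₁) (t + ε))) ∧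
    -- (3)
    ((∀ g ∈ Metric.closedBall (1 : G₁) (max 0 (r - ε)), dist (ς₂ (ς₁ g)) g ≤ ε) ∧
      (∀ g ∈ Metric.closedBall (1 : G₂) (max 0 (r - ε)), dist (ς₁ (ς₂ g)) g ≤ ε)) ∧
    -- (4)
    ((∀ g ∈ Metric.closedBall (1 : G₁) (max 0 (r - ε) / 2),
        ∀ g' ∈ Metric.closedBall (1 : G₁) (max 0 (r - ε) / 2),
          dist (ς₁ g * ς₁ g') (ς₁ (g * g')) ≤ 2 * ε) ∧
      (∀ g ∈ Metric.closedBall (1 : G₂) (max 0 (r - ε) / 2),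
        ∀ g' ∈ Metric.closedBall (1 : G₂) (max 0 (r - ε) / 2),
          dist (ς₂ g * ς₂ g') (ς₂ (g * g')) ≤ 2 * ε)) ∧
    -- (5)
    ((∀ g ∈ Metric.closedBall (1 : G₁) (max 0 (r - ε)),
        ∀ g' ∈ Metric.closedBall (1 : G₁) (max 0 (r - ε)),
          |dist (ς₁ g) (ς₁ g') - dist g g'| ≤ 2 * ε) ∧
      (∀ g ∈ Metric.closedBall (1 : G₂) (max 0 (r - ε)),
        ∀ g' ∈ Metric.closedBall (1 : G₂) (max 0 (r - ε)),
          |dist (ς₂ g) (ς₂ g') - dist g g'| ≤ 2 * ε)) :=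
  uiso_properties_general G₁ G₂ h_left₁ h_left₂ ε r hε ς₁ ς₂ h_iso
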